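/- Let P be a finite nonempty collection of cells and let [a,b] and [α,β] be inner intervals of P with a=(i,j), b=(k,l), c=(i,l), d=(k,j), whose anti-diagonal corners γ,δ satisfy γ=c and δ=(m,n)∈]a,b[ (so α=(i,n) and β=(m,l)); set h=(m,j) and r=(k,n), so that [h,r] is the inner interval with anti-diagonal corners d and δ. Let <^P be a P-order such that gcd(in(f_{a,b}), in(f_{α,β}))≠1. Then S(f_{a,b},f_{α,β}) reduces to 0 modulo G with respect to <^P_lex if and only if one of the following holds: (1) x_d x_α x_β <^P_lex x_δ x_a x_b, and either both h <^P a and α <^P a, or both h <^P δ and α <^P δ; (2) x_d x_α x_β <^P_lex x_δ x_a x_b, and either both r <^P δ and β <^P δ, or both r <^P b and β <^P b; (3) x_δ x_a x_b <^P_lex x_d x_α x_β, and either both r <^P α and a <^P α, or both r <^P d and a <^P d; (4) x_δ x_a x_b <^P_lex x_d x_α x_β, and either both h <^P d and b <^P d, or both h <^P β and b <^P β. -/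

import Mathlib

namespace ClosedPathPaper

open MvPolynomial

/-- Lattice points of `ℤ²`; a cell is identified with its lower left corner. -/
abbrev Pt : Type := ℤ × ℤ

/-- The four vertices (corners) of the unit cell with lower left corner `a`. -/
def cellVerts (a : Pt) : Set Pt :=
  {a, (a.1 + 1, a.2), (a.1, a.2 + 1), (a.1 + 1, a.2 + 1)}

/-- The vertex set `V(P)` of a collection of cells `P`. -/
def VP (P : Finset Pt) : Set Pt := ⋃ a ∈ P, cellVerts a

/-- `[a,b]` is a proper interval and every cell contained in it belongs to `P`. -/
def IsInnerInterval (P : Finset Pt) (a b : Pt) : Prop :=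
  a.1 < b.1 ∧ a.2 < b.2 ∧
    ∀ c : Pt, a.1 ≤ c.1 → c.1 < b.1 → a.2 ≤ c.2 → c.2 < b.2 → c ∈ P

/-- The four corners of the proper interval `[a,b]`:
diagonal corners `a, b` and anti-diagonal corners `c = (a.1, b.2)`, `d = (b.1, a.2)`. -/
def cornersOf (a b : Pt) : Finset Pt := {a, b, (a.1, b.2), (b.1, a.2)}

/-- The inner 2-minor `f_{a,b} = x_a x_b - x_c x_d` attached to the inner interval `[a,b]`. -/
noncomputable def innerMinor (K : Type*) [Field K] (a b : Pt) : MvPolynomial Pt K :=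
  X a * X b - X (a.1, b.2) * X (b.1, a.2)

/-- The set `G` of all inner 2-minors of `P`. -/
def minorsSet (K : Type*) [Field K] (P : Finset Pt) : Set (MvPolynomial Pt K) :=
  {f | ∃ a b : Pt, IsInnerInterval P a b ∧ f = innerMinor K a b}

/-- The polyomino ideal `I_P`. -/
noncomputable def polyoIdeal (K : Type*) [Field K] (P : Finset Pt) :
    Ideal (MvPolynomial Pt K) :=
  Ideal.span (minorsSet K P)

/-! ### Monomial orders -/

/-- Strict lexicographic comparison of exponent vectors induced by the
(strict total) order `po` on the variables. -/
def lexLt (po : Pt → Pt → Prop) (u v : Pt →₀ ℕ) : Prop :=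
  ∃ w : Pt, u w < v w ∧ ∀ w' : Pt, po w w' → u w' = v w'

def lexLe (po : Pt → Pt → Prop) (u v : Pt →₀ ℕ) : Prop := u = v ∨ lexLt po u v

/-- `m` is the leading monomial of `f` with respect to the lexicographic order
induced by `po`. -/
def IsLM {K : Type*} [Field K] (po : Pt → Pt → Prop) (f : MvPolynomial Pt K)
    (m : Pt →₀ ℕ) : Prop :=
  m ∈ f.support ∧ ∀ m' ∈ f.support, lexLe po m' m

/-- `sp` is the S-polynomial of `f` and `g` with respect to the lexicographic
order induced by `po`. -/
def IsSPoly {K : Type*} [Field K] (po : Pt → Pt → Prop) (f g sp : MvPolynomial Pt K) : Prop :=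
  ∃ mf mg : Pt →₀ ℕ, IsLM po f mf ∧ IsLM po g mg ∧
    sp = monomial (mf ⊔ mg - mf) (f.coeff mf)⁻¹ * f
       - monomial (mf ⊔ mg - mg) (g.coeff mg)⁻¹ * g

/-- `h` has a standard expression with respect to `G`, i.e. `h` reduces to `0`
modulo `G` with respect to the lexicographic order induced by `po`. -/
def ReducesToZero {K : Type*} [Field K] (po : Pt → Pt → Prop)
    (G : Set (MvPolynomial Pt K)) (h : MvPolynomial Pt K) : Prop :=
  ∃ (F : Finset (MvPolynomial Pt K)) (q : MvPolynomial Pt K → MvPolynomial Pt K),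
    ↑F ⊆ G ∧ h = ∑ g ∈ F, q g * g ∧
    ∀ g ∈ F, ∀ m, IsLM po (q g * g) m → ∃ mh, IsLM po h mh ∧ lexLe po m mh

/-- The exponent vector of `x_u x_v x_w`. -/
noncomputable def mono3 (u v w : Pt) : Pt →₀ ℕ :=
  Finsupp.single u 1 + Finsupp.single v 1 + Finsupp.single w 1

/-- The leading monomials, viewed as polynomials, of the members of `G`. -/
def leadingMonomials {K : Type*} [Field K] (po : Pt → Pt → Prop)
    (G : Set (MvPolynomial Pt K)) : Set (MvPolynomial Pt K) :=
  {f | ∃ g ∈ G, ∃ m, IsLM po g m ∧ f = monomial m (1 : K)}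

/-- The initial ideal of `I` with respect to the lexicographic order induced by `po`. -/
noncomputable def initialIdeal {K : Type*} [Field K] (po : Pt → Pt → Prop)
    (I : Ideal (MvPolynomial Pt K)) : Ideal (MvPolynomial Pt K) :=
  Ideal.span (leadingMonomials po (I : Set (MvPolynomial Pt K)))

/-- `G` is a Gröbner basis of `I`. -/
def IsGroebnerBasis {K : Type*} [Field K] (po : Pt → Pt → Prop)
    (G : Set (MvPolynomial Pt K)) (I : Ideal (MvPolynomial Pt K)) : Prop :=
  Ideal.span G = I ∧ Ideal.span (leadingMonomials po G) = initialIdeal po I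

/-- `G` is the reduced Gröbner basis of `I` (up to normalizing signs). -/
def IsReducedGroebnerBasis {K : Type*} [Field K] (po : Pt → Pt → Prop)
    (G : Set (MvPolynomial Pt K)) (I : Ideal (MvPolynomial Pt K)) : Prop :=
  IsGroebnerBasis po G I ∧
  (∀ g ∈ G, ∃ m, IsLM po g m ∧ (g.coeff m = 1 ∨ g.coeff m = -1)) ∧
  (∀ g ∈ G, ∀ g' ∈ G, g' ≠ g → ∀ m ∈ g.support, ∀ m', IsLM po g' m' → ¬ m' ≤ m)

/-! ### Closed paths and special configurations -/

/-- Two cells share a common edge. -/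
def cellAdj (a b : Pt) : Prop :=
  b = (a.1 + 1, a.2) ∨ b = (a.1 - 1, a.2) ∨ b = (a.1, a.2 + 1) ∨ b = (a.1, a.2 - 1)

/-- `P` is a closed path polyomino. -/
def IsClosedPath (P : Finset Pt) : Prop :=
  ∃ n : ℕ, 5 < n ∧ ∃ A : ZMod n → Pt,
    Function.Injective A ∧
    (∀ i, cellAdj (A i) (A (i + 1))) ∧
    (∀ i j : ZMod n, j ≠ i - 2 → j ≠ i - 1 → j ≠ i → j ≠ i + 1 → j ≠ i + 2 →
      cellVerts (A i) ∩ cellVerts (A j) = ∅) ∧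
    ∀ c : Pt, c ∈ P ↔ ∃ i, A i = c

/-- The horizontal block of rank `m` whose leftmost cell is `a`. -/
def hBlockCells (a : Pt) (m : ℕ) : Finset Pt :=
  (Finset.range m).image fun t : ℕ => (a.1 + (t : ℤ), a.2)

/-- The vertical block of rank `m` whose bottom cell is `a`. -/
def vBlockCells (a : Pt) (m : ℕ) : Finset Pt :=
  (Finset.range m).image fun t : ℕ => (a.1, a.2 + (t : ℤ))

/-- The vertex set of a finite set of cells. -/
def vertsOfCells (s : Finset Pt) : Set Pt := ⋃ c ∈ s, cellVerts c

/-- A W-pentomino of `P`: a horizontal block of rank two with leftmost cell `a₁`, a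
vertical block of rank two with bottom cell `a₂`, and a middle cell `A` not belonging to the
two blocks, such that the vertex sets of the two blocks meet exactly in the lower right
corner of `A`. -/
def IsWPentomino (P : Finset Pt) (a₁ a₂ A : Pt) : Prop :=
  hBlockCells a₁ 2 ⊆ P ∧ vBlockCells a₂ 2 ⊆ P ∧ A ∈ P ∧
  A ∉ hBlockCells a₁ 2 ∪ vBlockCells a₂ 2 ∧
  vertsOfCells (hBlockCells a₁ 2) ∩ vertsOfCells (vBlockCells a₂ 2) = {(A.1 + 1, A.2)}

/-- An RW-heptomino of `P`: a horizontal block of rank three with leftmost cell `a₁`, a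
vertical block of rank three with bottom cell `a₂`, and a middle cell `A` not belonging to
the two blocks, such that the vertex sets of the two blocks meet exactly in the upper left
corner of `A`. -/
def IsRWHeptomino (P : Finset Pt) (a₁ a₂ A : Pt) : Prop :=
  hBlockCells a₁ 3 ⊆ P ∧ vBlockCells a₂ 3 ⊆ P ∧ A ∈ P ∧
  A ∉ hBlockCells a₁ 3 ∪ vBlockCells a₂ 3 ∧
  vertsOfCells (hBlockCells a₁ 3) ∩ vertsOfCells (vBlockCells a₂ 3) = {(A.1, A.2 + 1)}

/-- An LD-horizontal skew tetromino of `P` (base point `p`): the cells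
`p, p+(1,0), p+(1,1), p+(2,1)`. -/
def IsLDhTetromino (P : Finset Pt) (p : Pt) : Prop :=
  p ∈ P ∧ (p.1 + 1, p.2) ∈ P ∧ (p.1 + 1, p.2 + 1) ∈ P ∧ (p.1 + 2, p.2 + 1) ∈ P

/-- An LD-vertical skew tetromino of `P` (base point `p`): the cells
`p, p+(0,1), p+(1,1), p+(1,2)`. -/
def IsLDvTetromino (P : Finset Pt) (p : Pt) : Prop :=
  p ∈ P ∧ (p.1, p.2 + 1) ∈ P ∧ (p.1 + 1, p.2 + 1) ∈ P ∧ (p.1 + 1, p.2 + 2) ∈ P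

/-- An LD-horizontal skew hexomino of `P` (base point `p`): the cells
`p, p+(1,0), p+(2,0), p+(2,1), p+(3,1), p+(4,1)`. -/
def IsLDhHexomino (P : Finset Pt) (p : Pt) : Prop :=
  p ∈ P ∧ (p.1 + 1, p.2) ∈ P ∧ (p.1 + 2, p.2) ∈ P ∧
  (p.1 + 2, p.2 + 1) ∈ P ∧ (p.1 + 3, p.2 + 1) ∈ P ∧ (p.1 + 4, p.2 + 1) ∈ P

/-- An LD-vertical skew hexomino of `P` (base point `p`): the cells
`p, p+(0,1), p+(0,2), p+(1,2), p+(1,3), p+(1,4)`. -/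
def IsLDvHexomino (P : Finset Pt) (p : Pt) : Prop :=
  p ∈ P ∧ (p.1, p.2 + 1) ∈ P ∧ (p.1, p.2 + 2) ∈ P ∧
  (p.1 + 1, p.2 + 2) ∈ P ∧ (p.1 + 1, p.2 + 3) ∈ P ∧ (p.1 + 1, p.2 + 4) ∈ P

/-- The total order `<¹` on `ℤ²`. -/
def lt1 (a b : Pt) : Prop := a.1 < b.1 ∨ (a.1 = b.1 ∧ a.2 < b.2)

/-- The P-order `<^Y` attached to a set `Y` of vertices. -/
def Ylt (Y : Set Pt) (a b : Pt) : Prop :=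
  (a ∉ Y ∧ b ∈ Y) ∨ (a ∉ Y ∧ b ∉ Y ∧ lt1 a b) ∨ (a ∈ Y ∧ b ∈ Y ∧ lt1 a b)

/-!
The gcd condition forces `in(f_{a,b}) = x_c x_d` and `in(f_{α,β}) = x_c x_δ`, so the S-polynomial is
the binomial `S = x_d x_α x_β - x_δ x_a x_b`. If `S` reduces to `0`, then `in(S)` is divisible by
the leading monomial `x_p x_q` of some inner minor, `p` and `q` being two of its three variables.
As the minors of `[a,b]` and `[α,β]` are led by their anti-diagonals, this leaves `x_a x_δ` or
`x_δ x_b` leading its minor when `in(S) = x_δ x_a x_b`, and `x_α x_d` or `x_d x_β` when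
`in(S) = x_d x_α x_β`. Conversely `S = -x_α f_{h,b} - x_b f_{a,δ} = -x_β f_{a,r} - x_a f_{δ,b}`,
and such an expression is standard as soon as its middle monomial `x_α x_h x_b`, resp.
`x_a x_β x_r`, lies below `in(S)`, which again amounts to one of these four monomials leading its
minor. Spelled out in terms of the corners, these are the conditions (1)–(4).

`lexLt po` is Mathlib's colexicographic order on `Pt →₀ ℕ` for `Pt` ordered by `po`.
-/

def VarOrder (_po : Pt → Pt → Prop) : Type := Pt

noncomputable instance {po : Pt → Pt → Prop} [h : IsStrictTotalOrder Pt po] :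
    LinearOrder (VarOrder po) :=
  @linearOrderOfSTO (VarOrder po) po h (Classical.decRel _)

def toColexOf (po : Pt → Pt → Prop) (u : Pt →₀ ℕ) : Colex (VarOrder po →₀ ℕ) := toColex u

theorem toColexOf_add (po : Pt → Pt → Prop) (u v : Pt →₀ ℕ) :
    toColexOf po (u + v) = toColexOf po u + toColexOf po v :=
  rfl

theorem toColexOf_inj {po : Pt → Pt → Prop} {u v : Pt →₀ ℕ} :
    toColexOf po u = toColexOf po v ↔ u = v :=
  Iff.rfl

noncomputable def mono2 (u v : Pt) : Pt →₀ ℕ := Finsupp.single u 1 + Finsupp.single v 1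

section Exponents

variable {p q x y z w : Pt}

theorem mono2_comm (p q : Pt) : mono2 p q = mono2 q p := add_comm _ _

theorem mono3_swap₁₂ (x y z : Pt) : mono3 x y z = mono3 y x z := by
  unfold mono3; abel

theorem mono3_swap₂₃ (x y z : Pt) : mono3 x y z = mono3 x z y := by
  unfold mono3; abel

theorem mono2_apply_ne_zero_iff : mono2 p q w ≠ 0 ↔ w = p ∨ w = q := by
  simp only [mono2, Finsupp.add_apply, Finsupp.single_apply]
  grind

theorem mono3_apply_ne_zero_iff : mono3 x y z w ≠ 0 ↔ w = x ∨ w = y ∨ w = z := by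
  simp only [mono3, Finsupp.add_apply, Finsupp.single_apply]
  grind

theorem mono2_ne (hp : p ≠ x) (hp' : p ≠ y) : mono2 p q ≠ mono2 x y := fun h =>
  (mono2_apply_ne_zero_iff.not.2 (by tauto)) (h ▸ mono2_apply_ne_zero_iff.2 (Or.inl rfl))

theorem mono3_ne (hx : x ≠ p) (hy : y ≠ p) (hz : z ≠ p) : mono3 p q w ≠ mono3 x y z :=
  fun h => (mono3_apply_ne_zero_iff.not.2 (by tauto)) (h ▸ mono3_apply_ne_zero_iff.2 (Or.inl rfl))

theorem mem_of_mono2_le_mono3 (h : mono2 p q ≤ mono3 x y z) :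
    (p = x ∨ p = y ∨ p = z) ∧ (q = x ∨ q = y ∨ q = z) := by
  have hmem : ∀ w, mono2 p q w ≠ 0 → w = x ∨ w = y ∨ w = z := fun w hw =>
    mono3_apply_ne_zero_iff.1 fun h0 => hw (Nat.eq_zero_of_le_zero (h0 ▸ h w))
  exact ⟨hmem p (mono2_apply_ne_zero_iff.2 (Or.inl rfl)),
    hmem q (mono2_apply_ne_zero_iff.2 (Or.inr rfl))⟩

theorem mono2_sup_mono2 (hxy : x ≠ y) (hxz : x ≠ z) (hyz : y ≠ z) :
    mono2 x y ⊔ mono2 x z = mono3 x y z := by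
  ext w
  simp only [Finsupp.sup_apply, mono2, mono3, Finsupp.add_apply, Finsupp.single_apply]
  split_ifs <;> simp_all

end Exponents

section LexOrder

variable {po : Pt → Pt → Prop} [IsStrictTotalOrder Pt po] {u v : Pt →₀ ℕ}

theorem lexLt_iff_toColexOf_lt : lexLt po u v ↔ toColexOf po u < toColexOf po v :=
  ⟨fun ⟨w, h₁, h₂⟩ => ⟨w, h₂, h₁⟩, fun ⟨w, h₁, h₂⟩ => ⟨w, h₂, h₁⟩⟩

theorem lexLe_iff_toColexOf_le : lexLe po u v ↔ toColexOf po u ≤ toColexOf po v := by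
  rw [lexLe, lexLt_iff_toColexOf_lt, le_iff_eq_or_lt]
  rfl

theorem lexLt_asymm (h : lexLt po u v) : ¬ lexLt po v u := by
  rw [lexLt_iff_toColexOf_lt] at *
  exact h.not_gt

theorem lexLt_ne (h : lexLt po u v) : u ≠ v := by
  rintro rfl
  exact lexLt_asymm h h

theorem lexLt_or_lexLt_of_ne (h : u ≠ v) : lexLt po u v ∨ lexLt po v u := by
  simp only [lexLt_iff_toColexOf_lt]
  exact lt_or_gt_of_ne h

theorem lexLe_antisymm (h : lexLe po u v) (h' : lexLe po v u) : u = v := by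
  rw [lexLe_iff_toColexOf_le] at *
  exact (le_antisymm h h' :)

theorem lexLt_mono3_right {p q p' q' : Pt} (h : lexLt po (mono2 p q) (mono2 p' q')) (x : Pt) :
    lexLt po (mono3 p q x) (mono3 p' q' x) := by
  rw [lexLt_iff_toColexOf_lt] at *
  exact add_lt_add_left h (toColexOf po (Finsupp.single x 1))

theorem lexLt_mono3_left {p q p' q' : Pt} (h : lexLt po (mono2 p q) (mono2 p' q')) (x : Pt) :
    lexLt po (mono3 x p q) (mono3 x p' q') := by
  rw [lexLt_iff_toColexOf_lt] at *
  unfold mono3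
  rw [add_assoc, add_assoc]
  exact add_lt_add_right h (toColexOf po (Finsupp.single x 1))

theorem lexLt_mono2_iff {p₁ p₂ q₁ q₂ : Pt} (h₁₁ : p₁ ≠ q₁) (h₁₂ : p₁ ≠ q₂) (h₂₁ : p₂ ≠ q₁)
    (h₂₂ : p₂ ≠ q₂) :
    lexLt po (mono2 p₁ p₂) (mono2 q₁ q₂) ↔ (po p₁ q₁ ∧ po p₂ q₁) ∨ (po p₁ q₂ ∧ po p₂ q₂) := by
  have hq : ∀ w, w ≠ q₁ → w ≠ q₂ → mono2 q₁ q₂ w = 0 := fun w h h' =>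
    not_not.1 (mono2_apply_ne_zero_iff.not.2 (by tauto))
  have hp : ∀ w, w ≠ p₁ → w ≠ p₂ → mono2 p₁ p₂ w = 0 := fun w h h' =>
    not_not.1 (mono2_apply_ne_zero_iff.not.2 (by tauto))
  constructor
  · rintro ⟨w, hlt, hagree⟩
    have hw : w = q₁ ∨ w = q₂ := mono2_apply_ne_zero_iff.1 (by omega)
    have below : ∀ p, p = p₁ ∨ p = p₂ → p ≠ q₁ → p ≠ q₂ → po p w := by
      intro p hpp hp₁ hp₂
      rcases trichotomous_of po p w with h | rfl | h
      · exact h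
      · tauto
      · exact absurd ((hagree p h).trans (hq p hp₁ hp₂)) (mono2_apply_ne_zero_iff.2 hpp)
    rcases hw with rfl | rfl
    · exact Or.inl ⟨below _ (Or.inl rfl) h₁₁ h₁₂, below _ (Or.inr rfl) h₂₁ h₂₂⟩
    · exact Or.inr ⟨below _ (Or.inl rfl) h₁₁ h₁₂, below _ (Or.inr rfl) h₂₁ h₂₂⟩
  · intro h
    -- the witness is the larger of `q₁` and `q₂`
    obtain ⟨t, ht, hq₁t, hq₂t⟩ : ∃ t, (t = q₁ ∨ t = q₂) ∧ ¬ po t q₁ ∧ ¬ po t q₂ := by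
      rcases trichotomous_of po q₁ q₂ with h' | rfl | h'
      · exact ⟨q₂, Or.inr rfl, asymm h', irrefl q₂⟩
      · exact ⟨q₁, Or.inl rfl, irrefl q₁, irrefl q₁⟩
      · exact ⟨q₁, Or.inl rfl, irrefl q₁, asymm h'⟩
    have hle_t : ∀ s q, ¬ po t q → po s q → po s t := fun s q hn hs => by
      rcases trichotomous_of po q t with h' | rfl | h'
      exacts [_root_.trans hs h', hs, absurd h' hn]
    have hp_t : po p₁ t ∧ po p₂ t := by
      rcases h with ⟨h₁, h₂⟩ | ⟨h₁, h₂⟩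
      exacts [⟨hle_t _ _ hq₁t h₁, hle_t _ _ hq₁t h₂⟩, ⟨hle_t _ _ hq₂t h₁, hle_t _ _ hq₂t h₂⟩]
    refine ⟨t, ?_, fun w htw => ?_⟩
    · rw [hp t (ne_of_irrefl hp_t.1).symm (ne_of_irrefl hp_t.2).symm]
      exact Nat.pos_of_ne_zero (mono2_apply_ne_zero_iff.2 ht)
    · rw [hp w (fun e => asymm hp_t.1 (e ▸ htw)) (fun e => asymm hp_t.2 (e ▸ htw)),
        hq w (fun e => hq₁t (e ▸ htw)) (fun e => hq₂t (e ▸ htw))]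

end LexOrder

section LeadingMonomial

variable {K : Type*} [Field K] {po : Pt → Pt → Prop} {f g : MvPolynomial Pt K} {m m' : Pt →₀ ℕ}

theorem isLM_neg_iff : IsLM po (-f) m ↔ IsLM po f m := by
  simp only [IsLM, support_neg]

variable [IsStrictTotalOrder Pt po]

theorem IsLM.unique (h : IsLM po f m) (h' : IsLM po f m') : m = m' :=
  lexLe_antisymm (h'.2 m h.1) (h.2 m' h'.1)

theorem exists_isLM (hf : f ≠ 0) : ∃ m, IsLM po f m := by
  obtain ⟨m, hm, hmax⟩ := f.support.exists_max_image (toColexOf po) (support_nonempty.2 hf)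
  exact ⟨m, hm, fun m' hm' => lexLe_iff_toColexOf_le.2 (hmax m' hm')⟩

theorem IsLM.mul {mf mg : Pt →₀ ℕ} (hf : IsLM po f mf) (hg : IsLM po g mg) :
    IsLM po (f * g) (mf + mg) := by
  classical
  simp only [IsLM, lexLe_iff_toColexOf_le] at *
  have hunique : ∀ s ∈ f.support, ∀ t ∈ g.support, s + t = mf + mg → s = mf ∧ t = mg := by
    intro s hs t ht hst
    simpa only [toColexOf_inj] using (add_eq_add_iff_eq_and_eq (hf.2 s hs) (hg.2 t ht)).1
      (by simp only [← toColexOf_add, hst])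
  refine ⟨?_, fun m hm => ?_⟩
  · rw [mem_support_iff, coeff_mul, Finset.sum_eq_single (mf, mg)]
    · exact mul_ne_zero (mem_support_iff.1 hf.1) (mem_support_iff.1 hg.1)
    · rintro ⟨s, t⟩ hst hne
      by_contra h0
      obtain ⟨hs, ht⟩ := ne_zero_and_ne_zero_of_mul h0
      obtain ⟨rfl, rfl⟩ := hunique s (mem_support_iff.2 hs) t (mem_support_iff.2 ht)
        (Finset.HasAntidiagonal.mem_antidiagonal.1 hst)
      exact hne rfl
    · simp
  · obtain ⟨s, hs, t, ht, rfl⟩ := Finset.mem_add.1 (support_mul f g hm)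
    rw [toColexOf_add, toColexOf_add]
    exact add_le_add (hf.2 s hs) (hg.2 t ht)

theorem support_monomial_sub_monomial {e₁ e₂ : Pt →₀ ℕ} (h : e₁ ≠ e₂) :
    (monomial e₁ (1 : K) - monomial e₂ 1).support = {e₁, e₂} := by
  ext e
  rw [mem_support_iff, coeff_sub, coeff_monomial, coeff_monomial]
  by_cases h₁ : e₁ = e <;> by_cases h₂ : e₂ = e <;> simp_all [eq_comm]

theorem support_monomial_sub_monomial_subset (e₁ e₂ : Pt →₀ ℕ) :
    (monomial e₁ (1 : K) - monomial e₂ 1).support ⊆ {e₁, e₂} := by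
  by_cases h : e₁ = e₂
  · simp [h]
  · rw [support_monomial_sub_monomial h]

theorem isLM_monomial_sub_monomial_left {e₁ e₂ : Pt →₀ ℕ} (h : lexLt po e₂ e₁) :
    IsLM po (monomial e₁ (1 : K) - monomial e₂ 1) e₁ := by
  rw [IsLM, support_monomial_sub_monomial (lexLt_ne h).symm]
  simp only [Finset.mem_insert, Finset.mem_singleton, true_or, forall_eq_or_imp, forall_eq,
    true_and]
  exact ⟨Or.inl rfl, Or.inr h⟩

theorem isLM_monomial_sub_monomial_right {e₁ e₂ : Pt →₀ ℕ} (h : lexLt po e₁ e₂) :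
    IsLM po (monomial e₁ (1 : K) - monomial e₂ 1) e₂ := by
  rw [← isLM_neg_iff, neg_sub]
  exact isLM_monomial_sub_monomial_left h

end LeadingMonomial

section Reduction

variable {K : Type*} [Field K] {po : Pt → Pt → Prop} {G : Set (MvPolynomial Pt K)}
  {sp : MvPolynomial Pt K} {M : Pt →₀ ℕ}

theorem reducesToZero_of_eq_add {g₁ g₂ q₁ q₂ : MvPolynomial Pt K} (hg₁ : g₁ ∈ G) (hg₂ : g₂ ∈ G)
    (heq : sp = q₁ * g₁ + q₂ * g₂) (hM : IsLM po sp M)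
    (h₁ : ∀ e ∈ (q₁ * g₁).support, lexLe po e M) (h₂ : ∀ e ∈ (q₂ * g₂).support, lexLe po e M) :
    ReducesToZero po G sp := by
  classical
  by_cases hg : g₁ = g₂
  · subst hg
    refine ⟨{g₁}, fun _ => q₁ + q₂, by simpa using hg₁, by simp [heq, add_mul], ?_⟩
    intro g hg e he
    obtain rfl := Finset.mem_singleton.1 hg
    rcases Finset.mem_union.1 (support_add (by simpa [add_mul] using he.1)) with he' | he'
    exacts [⟨M, hM, h₁ e he'⟩, ⟨M, hM, h₂ e he'⟩]
  · refine ⟨{g₁, g₂}, fun g => if g = g₁ then q₁ else q₂, ?_, ?_, ?_⟩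
    · simp [Set.insert_subset_iff, hg₁, hg₂]
    · simp [Finset.sum_pair hg, heq, Ne.symm hg]
    · intro g hg' e he
      simp only [Finset.mem_insert, Finset.mem_singleton] at hg'
      rcases hg' with rfl | rfl
      · exact ⟨M, hM, h₁ e (by simpa using he.1)⟩
      · exact ⟨M, hM, h₂ e (by simpa [Ne.symm hg] using he.1)⟩

theorem reducesToZero_of_telescope {g₁ g₂ q₁ q₂ : MvPolynomial Pt K} {e₁ e₂ e₃ : Pt →₀ ℕ}
    (hg₁ : g₁ ∈ G) (hg₂ : g₂ ∈ G) (h₁ : q₁ * g₁ = monomial e₁ 1 - monomial e₂ 1)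
    (h₂ : q₂ * g₂ = monomial e₂ 1 - monomial e₃ 1)
    (hM : IsLM po (monomial e₁ (1 : K) - monomial e₃ 1) M) (he₂ : lexLe po e₂ M) :
    ReducesToZero po G (monomial e₁ (1 : K) - monomial e₃ 1) := by
  classical
  have he₁₃ : e₁ ≠ e₃ := by
    rintro rfl
    simp [IsLM] at hM
  have hsupp := support_monomial_sub_monomial (K := K) he₁₃
  have he₁ : lexLe po e₁ M := hM.2 e₁ (by simp [hsupp])
  have he₃ : lexLe po e₃ M := hM.2 e₃ (by simp [hsupp])
  refine reducesToZero_of_eq_add hg₁ hg₂ (by rw [h₁, h₂, sub_add_sub_cancel]) hM ?_ ?_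
  · intro e he
    rw [h₁] at he
    rcases Finset.mem_insert.1 (support_monomial_sub_monomial_subset _ _ he) with rfl | he
    exacts [he₁, (Finset.mem_singleton.1 he) ▸ he₂]
  · intro e he
    rw [h₂] at he
    rcases Finset.mem_insert.1 (support_monomial_sub_monomial_subset _ _ he) with rfl | he
    exacts [he₂, (Finset.mem_singleton.1 he) ▸ he₃]

variable [IsStrictTotalOrder Pt po]

-- The leading term of `sp` must occur as the leading term of some `q g * g`.
theorem exists_isLM_le_of_reducesToZero (hred : ReducesToZero po G sp) (hM : IsLM po sp M) :
    ∃ g ∈ G, ∃ mg, IsLM po g mg ∧ mg ≤ M := by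
  obtain ⟨F, q, hFG, rfl, hstd⟩ := hred
  obtain ⟨g, hgF, hg⟩ : ∃ g ∈ F, coeff M (q g * g) ≠ 0 := by
    by_contra! h
    exact mem_support_iff.1 hM.1 (by rw [coeff_sum]; exact Finset.sum_eq_zero h)
  have hqg : q g * g ≠ 0 := fun h => hg (by rw [h, coeff_zero])
  obtain ⟨mq, hmq⟩ := exists_isLM (po := po) (left_ne_zero_of_mul hqg)
  obtain ⟨mg, hmg⟩ := exists_isLM (po := po) (right_ne_zero_of_mul hqg)
  have hmul := hmq.mul hmg
  obtain ⟨mh, hmh, hle⟩ := hstd g hgF _ hmul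
  have hM_eq : mq + mg = M :=
    lexLe_antisymm (hmh.unique hM ▸ hle) (hmul.2 M (mem_support_iff.2 hg))
  exact ⟨g, hFG hgF, mg, hmg, hM_eq ▸ le_add_self⟩

end Reduction

section InnerMinor

variable {K : Type*} [Field K] {po : Pt → Pt → Prop} {P : Finset Pt} {p q : Pt}

theorem monomial_mono2 (p q : Pt) : monomial (mono2 p q) (1 : K) = X p * X q := by
  rw [X, X, monomial_mul, one_mul, mono2]

theorem monomial_mono3 (x y z : Pt) : monomial (mono3 x y z) (1 : K) = X x * X y * X z := by
  rw [X, X, X, monomial_mul, monomial_mul, one_mul, one_mul, mono3]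

theorem innerMinor_eq (p q : Pt) :
    innerMinor K p q = monomial (mono2 p q) 1 - monomial (mono2 (p.1, q.2) (q.1, p.2)) 1 := by
  rw [monomial_mono2, monomial_mono2, innerMinor]

theorem innerMinor_comm (p q : Pt) : innerMinor K q p = innerMinor K p q := by
  simp only [innerMinor]
  ring

theorem innerMinor_antidiagonal (p q : Pt) :
    innerMinor K (p.1, q.2) (q.1, p.2) = -innerMinor K p q := by
  simp only [innerMinor]
  ring

theorem mono2_ne_mono2_antidiagonal (h₁ : p.1 ≠ q.1) (h₂ : p.2 ≠ q.2) :
    mono2 p q ≠ mono2 (p.1, q.2) (q.1, p.2) :=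
  mono2_ne (by simp [Prod.ext_iff, h₂]) (by simp [Prod.ext_iff, h₁])

theorem coeff_antidiagonal_innerMinor (h₁ : p.1 ≠ q.1) (h₂ : p.2 ≠ q.2) :
    (innerMinor K p q).coeff (mono2 (p.1, q.2) (q.1, p.2)) = -1 := by
  rw [innerMinor_eq, coeff_sub, coeff_monomial, coeff_monomial,
    if_neg (mono2_ne_mono2_antidiagonal h₁ h₂), if_pos rfl, zero_sub]

theorem IsInnerInterval.of_le {a b : Pt} (h : IsInnerInterval P a b) (ha₁ : a.1 ≤ p.1)
    (ha₂ : a.2 ≤ p.2) (hb₁ : q.1 ≤ b.1) (hb₂ : q.2 ≤ b.2) (h₁ : p.1 < q.1) (h₂ : p.2 < q.2) :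
    IsInnerInterval P p q :=
  ⟨h₁, h₂, fun c hc₁ hc₁' hc₂ hc₂' => h.2.2 c (by omega) (by omega) (by omega) (by omega)⟩

theorem innerMinor_mem_minorsSet (h : IsInnerInterval P p q) : innerMinor K p q ∈ minorsSet K P :=
  ⟨p, q, h, rfl⟩

theorem isLM_innerMinor_comm :
    IsLM po (innerMinor K q p) (mono2 q p) ↔ IsLM po (innerMinor K p q) (mono2 p q) := by
  rw [innerMinor_comm, mono2_comm]

variable [IsStrictTotalOrder Pt po]

theorem isLM_innerMinor_iff_lexLt (h₁ : p.1 ≠ q.1) (h₂ : p.2 ≠ q.2) :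
    IsLM po (innerMinor K p q) (mono2 p q) ↔
      lexLt po (mono2 (p.1, q.2) (q.1, p.2)) (mono2 p q) := by
  refine ⟨fun h => ?_, fun h => innerMinor_eq (K := K) p q ▸ isLM_monomial_sub_monomial_left h⟩
  rw [innerMinor_eq, IsLM, support_monomial_sub_monomial (mono2_ne_mono2_antidiagonal h₁ h₂)] at h
  rcases h.2 (mono2 (p.1, q.2) (q.1, p.2)) (by simp) with h' | h'
  exacts [absurd h' (mono2_ne_mono2_antidiagonal h₁ h₂).symm, h']

theorem isLM_innerMinor_iff (h₁ : p.1 ≠ q.1) (h₂ : p.2 ≠ q.2) :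
    IsLM po (innerMinor K p q) (mono2 p q) ↔
      (po (q.1, p.2) p ∧ po (p.1, q.2) p) ∨ (po (q.1, p.2) q ∧ po (p.1, q.2) q) := by
  rw [isLM_innerMinor_iff_lexLt h₁ h₂, mono2_comm (p.1, q.2)]
  exact lexLt_mono2_iff (by simp [Prod.ext_iff, h₁.symm]) (by simp [Prod.ext_iff, h₂])
    (by simp [Prod.ext_iff, h₂.symm]) (by simp [Prod.ext_iff, h₁])

theorem exists_isLM_innerMinor_le_of_reducesToZero {sp : MvPolynomial Pt K} {M : Pt →₀ ℕ}
    (hred : ReducesToZero po (minorsSet K P) sp) (hM : IsLM po sp M) :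
    ∃ p q : Pt, p.1 ≠ q.1 ∧ p.2 ≠ q.2 ∧ IsLM po (innerMinor K p q) (mono2 p q) ∧ mono2 p q ≤ M := by
  obtain ⟨_, ⟨u, v, huv, rfl⟩, mg, hmg, hle⟩ := exists_isLM_le_of_reducesToZero hred hM
  have h₁ : u.1 ≠ v.1 := huv.1.ne
  have h₂ : u.2 ≠ v.2 := huv.2.1.ne
  have hmem := hmg.1
  rw [innerMinor_eq, support_monomial_sub_monomial (mono2_ne_mono2_antidiagonal h₁ h₂)] at hmem
  rcases Finset.mem_insert.1 hmem with rfl | hmem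
  · exact ⟨u, v, h₁, h₂, hmg, hle⟩
  · obtain rfl := Finset.mem_singleton.1 hmem
    refine ⟨(u.1, v.2), (v.1, u.2), h₁, h₂.symm, ?_, hle⟩
    rwa [innerMinor_antidiagonal, isLM_neg_iff]

theorem isLM_innerMinor_of_reducesToZero {sp : MvPolynomial Pt K} {x y z : Pt}
    (hred : ReducesToZero po (minorsSet K P) sp) (hM : IsLM po sp (mono3 x y z))
    (hyz : ¬ IsLM po (innerMinor K y z) (mono2 y z)) :
    IsLM po (innerMinor K x y) (mono2 x y) ∨ IsLM po (innerMinor K x z) (mono2 x z) := by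
  obtain ⟨p, q, hpq, -, hLM, hle⟩ := exists_isLM_innerMinor_le_of_reducesToZero hred hM
  obtain ⟨hp, hq⟩ := mem_of_mono2_le_mono3 hle
  rcases hp with rfl | rfl | rfl <;> rcases hq with rfl | rfl | rfl
  · exact absurd rfl hpq
  · exact Or.inl hLM
  · exact Or.inr hLM
  · exact Or.inl (isLM_innerMinor_comm.1 hLM)
  · exact absurd rfl hpq
  · exact absurd hLM hyz
  · exact Or.inr (isLM_innerMinor_comm.1 hLM)
  · exact absurd (isLM_innerMinor_comm.1 hLM) hyz
  · exact absurd rfl hpq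

end InnerMinor

section Configuration

variable {K : Type*} [Field K] {P : Finset Pt} {po : Pt → Pt → Prop} {i j k l m n : ℤ}
  {M : Pt →₀ ℕ}

/-- In the notation of the theorem, `x_d x_α x_β - x_δ x_a x_b`. -/
noncomputable def sPolyCase4 (K : Type*) [Field K] (i j k l m n : ℤ) : MvPolynomial Pt K :=
  monomial (mono3 (k, j) (i, n) (m, l)) 1 - monomial (mono3 (m, n) (i, j) (k, l)) 1

theorem isLM_innerMinors_of_gcd (him : i < m) (hmk : m < k) (hjn : j < n) (hnl : n < l)
    (hgcd : ∃ mf mg : Pt →₀ ℕ, IsLM po (innerMinor K (i, j) (k, l)) mf ∧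
      IsLM po (innerMinor K (i, n) (m, l)) mg ∧ ∃ w, 0 < mf w ∧ 0 < mg w) :
    IsLM po (innerMinor K (i, j) (k, l)) (mono2 (i, l) (k, j)) ∧
      IsLM po (innerMinor K (i, n) (m, l)) (mono2 (i, l) (m, n)) := by
  obtain ⟨mf, mg, hmf, hmg, w, hwf, hwg⟩ := hgcd
  have hsf := hmf.1
  have hsg := hmg.1
  rw [innerMinor_eq, support_monomial_sub_monomial (mono2_ne_mono2_antidiagonal
    (by simp; omega) (by simp; omega))] at hsf
  rw [innerMinor_eq, support_monomial_sub_monomial (mono2_ne_mono2_antidiagonal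
    (by simp; omega) (by simp; omega))] at hsg
  simp only [Finset.mem_insert, Finset.mem_singleton] at hsf hsg
  rcases hsf with rfl | rfl <;> rcases hsg with rfl | rfl
  -- only `x_c x_d` and `x_c x_δ` share a variable
  all_goals first
    | exact ⟨hmf, hmg⟩
    | have hwf' := mono2_apply_ne_zero_iff.1 hwf.ne'
      have hwg' := mono2_apply_ne_zero_iff.1 hwg.ne'
      simp only [Prod.ext_iff] at hwf' hwg'
      omega

-- `S = -x_α f_{h,b} - x_b f_{a,δ}`, passing through the monomial `x_α x_h x_b`.
theorem reducesToZero_sPolyCase4_through_h (hab : IsInnerInterval P (i, j) (k, l)) (him : i < m)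
    (hmk : m < k) (hjn : j < n) (hnl : n < l) (hM : IsLM po (sPolyCase4 K i j k l m n) M)
    (hmid : lexLe po (mono3 (i, n) (m, j) (k, l)) M) :
    ReducesToZero po (minorsSet K P) (sPolyCase4 K i j k l m n) := by
  rw [sPolyCase4] at hM ⊢
  refine reducesToZero_of_telescope (g₁ := innerMinor K (m, j) (k, l)) (q₁ := -X (i, n))
    (g₂ := innerMinor K (i, j) (m, n)) (q₂ := -X (k, l))
    (innerMinor_mem_minorsSet (hab.of_le him.le le_rfl le_rfl le_rfl hmk (hjn.trans hnl)))
    (innerMinor_mem_minorsSet (hab.of_le le_rfl le_rfl hmk.le hnl.le him hjn)) ?_ ?_ hM hmid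
  all_goals simp only [monomial_mono3, innerMinor]; ring

-- `S = -x_β f_{a,r} - x_a f_{δ,b}`, passing through the monomial `x_a x_β x_r`.
theorem reducesToZero_sPolyCase4_through_r (hab : IsInnerInterval P (i, j) (k, l)) (him : i < m)
    (hmk : m < k) (hjn : j < n) (hnl : n < l) (hM : IsLM po (sPolyCase4 K i j k l m n) M)
    (hmid : lexLe po (mono3 (i, j) (m, l) (k, n)) M) :
    ReducesToZero po (minorsSet K P) (sPolyCase4 K i j k l m n) := by
  rw [sPolyCase4] at hM ⊢
  refine reducesToZero_of_telescope (g₁ := innerMinor K (i, j) (k, n)) (q₁ := -X (m, l))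
    (g₂ := innerMinor K (m, n) (k, l)) (q₂ := -X (i, j))
    (innerMinor_mem_minorsSet (hab.of_le le_rfl le_rfl le_rfl hnl.le (him.trans hmk) hjn))
    (innerMinor_mem_minorsSet (hab.of_le him.le hjn.le le_rfl le_rfl hmk hnl)) ?_ ?_ hM hmid
  all_goals simp only [monomial_mono3, innerMinor]; ring

variable [IsStrictTotalOrder Pt po]

theorem isSPoly_innerMinors_iff (him : i < m) (hmk : m < k) (hjn : j < n) (hnl : n < l)
    (h₁ : IsLM po (innerMinor K (i, j) (k, l)) (mono2 (i, l) (k, j)))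
    (h₂ : IsLM po (innerMinor K (i, n) (m, l)) (mono2 (i, l) (m, n))) {sp : MvPolynomial Pt K} :
    IsSPoly po (innerMinor K (i, j) (k, l)) (innerMinor K (i, n) (m, l)) sp ↔
      sp = sPolyCase4 K i j k l m n := by
  have hsp : monomial (mono2 (i, l) (k, j) ⊔ mono2 (i, l) (m, n) - mono2 (i, l) (k, j))
        ((innerMinor K (i, j) (k, l)).coeff (mono2 (i, l) (k, j)))⁻¹ * innerMinor K (i, j) (k, l) -
      monomial (mono2 (i, l) (k, j) ⊔ mono2 (i, l) (m, n) - mono2 (i, l) (m, n))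
        ((innerMinor K (i, n) (m, l)).coeff (mono2 (i, l) (m, n)))⁻¹ * innerMinor K (i, n) (m, l) =
      sPolyCase4 K i j k l m n := by
    rw [mono2_sup_mono2 (by simp; omega) (by simp; omega) (by simp; omega),
      coeff_antidiagonal_innerMinor (p := (i, j)) (q := (k, l)) (by simp; omega) (by simp; omega),
      coeff_antidiagonal_innerMinor (p := (i, n)) (q := (m, l)) (by simp; omega) (by simp; omega)]
    have hX : ∀ x : Pt, monomial (Finsupp.single x 1) (-1 : K)⁻¹ = -X x := fun x => by
      rw [inv_neg, inv_one, map_neg, X]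
    rw [show mono3 (i, l) (k, j) (m, n) - mono2 (i, l) (k, j) = Finsupp.single (m, n) 1 from
        add_tsub_cancel_left _ _, mono3_swap₂₃,
      show mono3 (i, l) (m, n) (k, j) - mono2 (i, l) (m, n) = Finsupp.single (k, j) 1 from
        add_tsub_cancel_left _ _, hX, hX, sPolyCase4, monomial_mono3, monomial_mono3]
    simp only [innerMinor]
    ring
  constructor
  · rintro ⟨mf, mg, hmf, hmg, rfl⟩
    rw [hmf.unique h₁, hmg.unique h₂, hsp]
  · rintro rfl
    exact ⟨_, _, h₁, h₂, hsp.symm⟩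

theorem reducesToZero_sPolyCase4_iff_of_lt (hab : IsInnerInterval P (i, j) (k, l)) (him : i < m)
    (hmk : m < k) (hjn : j < n) (hnl : n < l)
    (hLM : IsLM po (innerMinor K (i, j) (k, l)) (mono2 (i, l) (k, j)))
    (hlt : lexLt po (mono3 (k, j) (i, n) (m, l)) (mono3 (m, n) (i, j) (k, l))) :
    ReducesToZero po (minorsSet K P) (sPolyCase4 K i j k l m n) ↔
      IsLM po (innerMinor K (i, j) (m, n)) (mono2 (i, j) (m, n)) ∨
        IsLM po (innerMinor K (m, n) (k, l)) (mono2 (m, n) (k, l)) := by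
  have hM : IsLM po (sPolyCase4 K i j k l m n) (mono3 (m, n) (i, j) (k, l)) :=
    isLM_monomial_sub_monomial_right hlt
  refine ⟨fun hred => ?_, ?_⟩
  · rcases isLM_innerMinor_of_reducesToZero hred hM
      (fun h => mono2_ne_mono2_antidiagonal (by simp; omega) (by simp; omega) (h.unique hLM))
      with h | h
    exacts [Or.inl (isLM_innerMinor_comm.1 h), Or.inr h]
  · rintro (h | h)
    · refine reducesToZero_sPolyCase4_through_h hab him hmk hjn hnl hM (Or.inr ?_)
      rw [mono3_swap₁₂ (m, n)]
      exact lexLt_mono3_right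
        ((isLM_innerMinor_iff_lexLt (by simp; omega) (by simp; omega)).1 h) _
    · refine reducesToZero_sPolyCase4_through_r hab him hmk hjn hnl hM (Or.inr ?_)
      rw [mono3_swap₁₂ (m, n)]
      exact lexLt_mono3_left
        ((isLM_innerMinor_iff_lexLt (by simp; omega) (by simp; omega)).1 h) _

theorem reducesToZero_sPolyCase4_iff_of_gt (hab : IsInnerInterval P (i, j) (k, l)) (him : i < m)
    (hmk : m < k) (hjn : j < n) (hnl : n < l)
    (hLM : IsLM po (innerMinor K (i, n) (m, l)) (mono2 (i, l) (m, n)))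
    (hlt : lexLt po (mono3 (m, n) (i, j) (k, l)) (mono3 (k, j) (i, n) (m, l))) :
    ReducesToZero po (minorsSet K P) (sPolyCase4 K i j k l m n) ↔
      IsLM po (innerMinor K (i, n) (k, j)) (mono2 (i, n) (k, j)) ∨
        IsLM po (innerMinor K (k, j) (m, l)) (mono2 (k, j) (m, l)) := by
  have hM : IsLM po (sPolyCase4 K i j k l m n) (mono3 (k, j) (i, n) (m, l)) :=
    isLM_monomial_sub_monomial_left hlt
  refine ⟨fun hred => ?_, ?_⟩
  · rcases isLM_innerMinor_of_reducesToZero hred hM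
      (fun h => mono2_ne_mono2_antidiagonal (by simp; omega) (by simp; omega) (h.unique hLM))
      with h | h
    exacts [Or.inl (isLM_innerMinor_comm.1 h), Or.inr h]
  · rintro (h | h)
    · refine reducesToZero_sPolyCase4_through_r hab him hmk hjn hnl hM (Or.inr ?_)
      rw [mono3_swap₂₃ (i, j), mono3_swap₁₂ (k, j)]
      exact lexLt_mono3_right
        ((isLM_innerMinor_iff_lexLt (by simp; omega) (by simp; omega)).1 h) _
    · refine reducesToZero_sPolyCase4_through_h hab him hmk hjn hnl hM (Or.inr ?_)
      rw [mono3_swap₂₃ (i, n) (m, j), mono3_swap₁₂ (k, j)]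
      exact lexLt_mono3_left
        ((isLM_innerMinor_iff_lexLt (by simp; omega) (by simp; omega)).1 h) _

end Configuration

theorem sPoly_reducesToZero_iff_case4_general
    (K : Type*) [Field K] (P : Finset Pt)
    (i j k l m n : ℤ)
    (a b d α β δ h r : Pt)
    (ha : a = (i, j)) (hb : b = (k, l)) (hd : d = (k, j))
    (hα : α = (i, n)) (hβ : β = (m, l)) (hδ : δ = (m, n))
    (hh : h = (m, j)) (hr : r = (k, n))
    (him : i < m) (hmk : m < k) (hjn : j < n) (hnl : n < l)
    (hab : IsInnerInterval P a b)
    (po : Pt → Pt → Prop) (hpo : IsStrictTotalOrder Pt po)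
    (hgcd : ∃ mf mg : Pt →₀ ℕ, IsLM po (innerMinor K a b) mf ∧
      IsLM po (innerMinor K α β) mg ∧ ∃ w, 0 < mf w ∧ 0 < mg w) :
    (∀ sp, IsSPoly po (innerMinor K a b) (innerMinor K α β) sp →
        ReducesToZero po (minorsSet K P) sp) ↔
      ((lexLt po (mono3 d α β) (mono3 δ a b) ∧
          ((po h a ∧ po α a) ∨ (po h δ ∧ po α δ))) ∨
       (lexLt po (mono3 d α β) (mono3 δ a b) ∧
          ((po r δ ∧ po β δ) ∨ (po r b ∧ po β b))) ∨
       (lexLt po (mono3 δ a b) (mono3 d α β) ∧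
          ((po r α ∧ po a α) ∨ (po r d ∧ po a d))) ∨
       (lexLt po (mono3 δ a b) (mono3 d α β) ∧
          ((po h d ∧ po b d) ∨ (po h β ∧ po b β)))) := by
  subst ha hb hd hα hβ hδ hh hr
  obtain ⟨hLM₁, hLM₂⟩ := isLM_innerMinors_of_gcd him hmk hjn hnl hgcd
  simp only [isSPoly_innerMinors_iff him hmk hjn hnl hLM₁ hLM₂, forall_eq]
  have hne : mono3 (k, j) (i, n) (m, l) ≠ mono3 (m, n) (i, j) (k, l) :=
    mono3_ne (by simp; omega) (by simp; omega) (by simp; omega)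
  rcases lexLt_or_lexLt_of_ne (po := po) hne with hlt | hlt
  · rw [reducesToZero_sPolyCase4_iff_of_lt hab him hmk hjn hnl hLM₁ hlt,
      isLM_innerMinor_iff (by simp; omega) (by simp; omega),
      isLM_innerMinor_iff (by simp; omega) (by simp; omega)]
    simp only [hlt, lexLt_asymm hlt, true_and, false_and, or_false]
  · rw [reducesToZero_sPolyCase4_iff_of_gt hab him hmk hjn hnl hLM₂ hlt,
      isLM_innerMinor_iff (by simp; omega) (by simp; omega),
      isLM_innerMinor_iff (by simp; omega) (by simp; omega)]
    simp only [hlt, lexLt_asymm hlt, true_and, false_and, false_or]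

theorem sPoly_reducesToZero_iff_case4
    (K : Type*) [Field K] (P : Finset Pt) (hP : P.Nonempty)
    (i j k l m n : ℤ)
    (a b c d α β γ δ h r : Pt)
    (ha : a = (i, j)) (hb : b = (k, l)) (hc : c = (i, l)) (hd : d = (k, j))
    (hα : α = (i, n)) (hβ : β = (m, l)) (hγ : γ = c) (hδ : δ = (m, n))
    (hh : h = (m, j)) (hr : r = (k, n))
    (him : i < m) (hmk : m < k) (hjn : j < n) (hnl : n < l)
    (hab : IsInnerInterval P a b) (hαβ : IsInnerInterval P α β)
    (po : Pt → Pt → Prop) (hpo : IsStrictTotalOrder Pt po)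
    (hgcd : ∃ mf mg : Pt →₀ ℕ, IsLM po (innerMinor K a b) mf ∧
      IsLM po (innerMinor K α β) mg ∧ ∃ w, 0 < mf w ∧ 0 < mg w) :
    (∀ sp, IsSPoly po (innerMinor K a b) (innerMinor K α β) sp →
        ReducesToZero po (minorsSet K P) sp) ↔
      ((lexLt po (mono3 d α β) (mono3 δ a b) ∧
          ((po h a ∧ po α a) ∨ (po h δ ∧ po α δ))) ∨
       (lexLt po (mono3 d α β) (mono3 δ a b) ∧
          ((po r δ ∧ po β δ) ∨ (po r b ∧ po β b))) ∨
       (lexLt po (mono3 δ a b) (mono3 d α β) ∧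
          ((po r α ∧ po a α) ∨ (po r d ∧ po a d))) ∨
       (lexLt po (mono3 δ a b) (mono3 d α β) ∧
          ((po h d ∧ po b d) ∨ (po h β ∧ po b β)))) :=
  sPoly_reducesToZero_iff_case4_general K P i j k l m n a b d α β δ h r ha hb hd hα hβ hδ hh hr him
    hmk hjn hnl hab po hpo hgcd

end ClosedPathPaper
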